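/- Let G be a finite graph with Bethe-Hessian H_r and suppose r > 1, p ≥ 2, and the p-th smallest eigenvalue of D − rA is strictly negative. Set τ(r) = −s_p^↑(D − rA). Then the p-th largest eigenvalue of L_{τ(r)}^{sym} = (D + τ(r)I)^{-1/2} A (D + τ(r)I)^{-1/2} equals 1/r. -/

import Mathlib

/-!
Put `τ = -s_p(D - rA) > 0` and `S = (D + τ)^{1/2}`. Then `S⁻¹ (D - rA + τ) S⁻¹ = 1 - r L_τ^{sym}`,
so by Sylvester's law of inertia `1 - r L_τ^{sym}` has exactly as many negative (positive)
eigenvalues as `D - rA + τ`, that is at most `p - 1` (at most `n - p`). Hence at most `p - 1`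
eigenvalues of `L_τ^{sym}` exceed `1/r` and at most `n - p` lie below it, which forces the `p`-th
largest one to be `1/r`.
-/

open Matrix

/-- Ascending list of eigenvalues (with multiplicity) of a Hermitian real matrix. -/
noncomputable def sortEig {n : ℕ} {M : Matrix (Fin n) (Fin n) ℝ} (hM : M.IsHermitian) :
    Fin n → ℝ :=
  fun i => hM.eigenvalues (Tuple.sort hM.eigenvalues i)

open QuadraticMap QuadraticForm

namespace Matrix

variable {n R : Type*} [Fintype n] [DecidableEq n] [CommRing R]

lemma toQuadraticForm'_apply (M : Matrix n n R) (x : n → R) :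
    M.toQuadraticForm' x = x ⬝ᵥ M *ᵥ x := by
  rw [toQuadraticForm', LinearMap.BilinMap.toQuadraticMap_apply, toLinearMap₂'_apply']

lemma toQuadraticForm'_diagonal (w : n → R) :
    (diagonal w).toQuadraticForm' = weightedSumSquares R w := by
  ext x
  simp [toQuadraticForm'_apply, dotProduct, mulVec_diagonal, mul_left_comm]

lemma toQuadraticForm'_transpose_mul_mul (P M : Matrix n n R) :
    (Pᵀ * M * P).toQuadraticForm' = M.toQuadraticForm'.comp (toLin' P) := by
  ext x
  rw [QuadraticMap.comp_apply, toLin'_apply, toQuadraticForm'_apply, toQuadraticForm'_apply,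
    ← mulVec_mulVec, ← mulVec_mulVec, dotProduct_mulVec, vecMul_transpose]

lemma equivalent_toQuadraticForm'_transpose_mul_mul {P : Matrix n n R} (hP : IsUnit P)
    (M : Matrix n n R) : M.toQuadraticForm'.Equivalent (Pᵀ * M * P).toQuadraticForm' := by
  rw [toQuadraticForm'_transpose_mul_mul]
  exact ⟨isometryEquivOfCompLinearEquiv _ (toLinearEquiv' P hP.invertible)⟩

namespace IsHermitian

variable {M : Matrix n n ℝ}

lemma transpose_eigenvectorUnitary_mul_mul (hM : M.IsHermitian) :
    (hM.eigenvectorUnitary : Matrix n n ℝ)ᵀ * M * hM.eigenvectorUnitary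
      = diagonal hM.eigenvalues := by
  simpa [Unitary.conjStarAlgAut_apply, star_eq_conjTranspose] using
    hM.conjStarAlgAut_star_eigenvectorUnitary

lemma equivalent_weightedSumSquares (hM : M.IsHermitian) (a b : ℝ) :
    (a • 1 + b • M).toQuadraticForm'.Equivalent
      (weightedSumSquares ℝ fun i => a + b * hM.eigenvalues i) := by
  set U : Matrix n n ℝ := (hM.eigenvectorUnitary : Matrix n n ℝ)
  have hU : Uᵀ * U = 1 := by
    simpa [star_eq_conjTranspose] using Unitary.coe_star_mul_self hM.eigenvectorUnitary
  have hdiag : Uᵀ * (a • 1 + b • M) * U = diagonal fun i => a + b * hM.eigenvalues i := by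
    rw [mul_add, add_mul, Matrix.mul_smul, Matrix.smul_mul, mul_one, hU, Matrix.mul_smul,
      Matrix.smul_mul, transpose_eigenvectorUnitary_mul_mul, ← diagonal_one, ← diagonal_smul,
      ← diagonal_smul, diagonal_add]
    simp only [Pi.smul_apply, smul_eq_mul, mul_one]
  rw [← toQuadraticForm'_diagonal, ← hdiag]
  exact equivalent_toQuadraticForm'_transpose_mul_mul
    ((isUnit_iff_isUnit_det U).2 (isUnit_det_of_left_inverse hU)) _

lemma inertia_eq_of_transpose_mul_mul_eq {N : Matrix n n ℝ} (hM : M.IsHermitian)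
    (hN : N.IsHermitian) {P : Matrix n n ℝ} (hP : IsUnit P) {a b c d : ℝ}
    (h : Pᵀ * (a • 1 + b • M) * P = c • 1 + d • N) :
    {i | a + b * hM.eigenvalues i < 0}.ncard = {i | c + d * hN.eigenvalues i < 0}.ncard ∧
      {i | 0 < a + b * hM.eigenvalues i}.ncard = {i | 0 < c + d * hN.eigenvalues i}.ncard := by
  have hMN := (hM.equivalent_weightedSumSquares a b).symm.trans
    ((h ▸ equivalent_toQuadraticForm'_transpose_mul_mul hP _).trans
      (hN.equivalent_weightedSumSquares c d))
  rw [← sigNeg_weightedSumSquares, ← sigNeg_weightedSumSquares, ← sigPos_weightedSumSquares,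
    ← sigPos_weightedSumSquares]
  exact ⟨hMN.sigNeg_eq, hMN.sigPos_eq⟩

end IsHermitian

lemma transpose_inv_mul_mul_self_sub_smul_mul_inv {S : Matrix n n R} (hSymm : Sᵀ = S)
    (hS : IsUnit S) (r : R) (A : Matrix n n R) :
    (S⁻¹)ᵀ * (S * S - r • A) * S⁻¹ = 1 - r • (S⁻¹ * A * S⁻¹) := by
  have hdet := (isUnit_iff_isUnit_det S).1 hS
  rw [transpose_nonsing_inv, hSymm, Matrix.mul_sub, Matrix.sub_mul, ← Matrix.mul_assoc,
    nonsing_inv_mul _ hdet, Matrix.one_mul, mul_nonsing_inv _ hdet, Matrix.mul_smul,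
    Matrix.smul_mul]

end Matrix

namespace Tuple

variable {n : ℕ} {α : Type*} [LinearOrder α]

lemma ncard_lt_apply_sort_le (f : Fin n → α) (k : Fin n) :
    {i | f i < f (sort f k)}.ncard ≤ k := by
  calc {i | f i < f (sort f k)}.ncard ≤ (sort f '' Set.Iio k).ncard := by
        refine Set.ncard_le_ncard fun i hi => ⟨(sort f).symm i, ?_, (sort f).apply_symm_apply i⟩
        exact (monotone_sort f).reflect_lt (by simpa using hi)
    _ = k := by
      rw [Set.ncard_image_of_injective _ (sort f).injective, Set.ncard_eq_toFinset_card',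
        Set.toFinset_Iio, Fin.card_Iio]

lemma ncard_apply_sort_lt_le (f : Fin n → α) (k : Fin n) :
    {i | f (sort f k) < f i}.ncard ≤ n - 1 - k := by
  calc {i | f (sort f k) < f i}.ncard ≤ (sort f '' Set.Ioi k).ncard := by
        refine Set.ncard_le_ncard fun i hi => ⟨(sort f).symm i, ?_, (sort f).apply_symm_apply i⟩
        exact (monotone_sort f).reflect_lt (by simpa using hi)
    _ = n - 1 - k := by
      rw [Set.ncard_image_of_injective _ (sort f).injective, Set.ncard_eq_toFinset_card',
        Set.toFinset_Ioi, Fin.card_Ioi]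

lemma apply_sort_eq_of_ncard_le {f : Fin n → α} {k : Fin n} {c : α}
    (hlt : {i | f i < c}.ncard ≤ k) (hgt : {i | c < f i}.ncard ≤ n - 1 - k) :
    f (sort f k) = c := by
  have hk := k.isLt
  rcases lt_trichotomy (f (sort f k)) c with hfc | hfc | hfc
  · have : (sort f '' Set.Iic k).ncard ≤ {i | f i < c}.ncard := by
      refine Set.ncard_le_ncard ?_
      rintro _ ⟨j, hj, rfl⟩
      exact lt_of_le_of_lt (monotone_sort f hj) hfc
    rw [Set.ncard_image_of_injective _ (sort f).injective, Set.ncard_eq_toFinset_card',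
      Set.toFinset_Iic, Fin.card_Iic] at this
    omega
  · exact hfc
  · have : (sort f '' Set.Ici k).ncard ≤ {i | c < f i}.ncard := by
      refine Set.ncard_le_ncard ?_
      rintro _ ⟨j, hj, rfl⟩
      exact lt_of_lt_of_le hfc (monotone_sort f hj)
    rw [Set.ncard_image_of_injective _ (sort f).injective, Set.ncard_eq_toFinset_card',
      Set.toFinset_Ici, Fin.card_Ici] at this
    omega

end Tuple

lemma Matrix.IsHermitian.sortEig_rev_eq_one_div_of_transpose_mul_mul_eq {n : ℕ}
    {M N P : Matrix (Fin n) (Fin n) ℝ} (hM : M.IsHermitian) (hN : N.IsHermitian) (hP : IsUnit P)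
    {r : ℝ} (hr : 0 < r) (k : Fin n) (h : Pᵀ * (M - sortEig hM k • 1) * P = 1 - r • N) :
    sortEig hN k.rev = 1 / r := by
  set μ := sortEig hM k
  have h' : Pᵀ * ((-μ) • 1 + (1 : ℝ) • M) * P = (1 : ℝ) • 1 + (-r) • N := by
    rwa [one_smul, one_smul, neg_smul, neg_smul, ← sub_eq_add_neg, neg_add_eq_sub]
  obtain ⟨hbelow, habove⟩ := hM.inertia_eq_of_transpose_mul_mul_eq hN hP h'
  have hlt_inv : ∀ x, x < 1 / r ↔ 0 < 1 + -r * x := fun x => by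
    rw [lt_div_iff₀ hr]; constructor <;> intro <;> linarith
  have hinv_lt : ∀ x, 1 / r < x ↔ 1 + -r * x < 0 := fun x => by
    rw [div_lt_iff₀ hr]; constructor <;> intro <;> linarith
  have hμ_lt : ∀ x, μ < x ↔ 0 < -μ + 1 * x := fun x => by
    constructor <;> intro <;> linarith
  have hlt_μ : ∀ x, x < μ ↔ -μ + 1 * x < 0 := fun x => by
    constructor <;> intro <;> linarith
  refine Tuple.apply_sort_eq_of_ncard_le ?_ ?_
  · simp only [hlt_inv, ← habove, ← hμ_lt]
    exact (Tuple.ncard_apply_sort_lt_le hM.eigenvalues k).trans_eq (by rw [Fin.val_rev]; omega)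
  · simp only [hinv_lt, ← hbelow, ← hlt_μ]
    exact (Tuple.ncard_lt_apply_sort_le hM.eigenvalues k).trans_eq (by rw [Fin.val_rev]; omega)

/-- if `r > 1`, `p ≥ 2` and the `p`-th smallest eigenvalue `s` of
`D − rA` is strictly negative, then with `τ = −s`, the `p`-th largest eigenvalue of
`L_τ^{sym} = (D+τI)^{-1/2} A (D+τI)^{-1/2}` equals `1/r`. -/
theorem stmt13 {n : ℕ} (A D : Matrix (Fin n) (Fin n) ℝ)
    (hA01 : ∀ i j, A i j = 0 ∨ A i j = 1)
    (hD : D = Matrix.diagonal fun i => ∑ j, A i j)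
    (r : ℝ) (hr : 1 < r) (p : ℕ) (hp2 : 2 ≤ p) (hpn : p ≤ n)
    (hH : (D - r • A).IsHermitian)
    (hneg : sortEig hH ⟨p - 1, by omega⟩ < 0)
    (hLs : ((Matrix.diagonal fun i =>
          Real.sqrt ((∑ j, A i j) + (-(sortEig hH ⟨p - 1, by omega⟩))))⁻¹ * A *
        (Matrix.diagonal fun i =>
          Real.sqrt ((∑ j, A i j) + (-(sortEig hH ⟨p - 1, by omega⟩))))⁻¹).IsHermitian) :
    sortEig hLs ⟨n - p, by omega⟩ = 1 / r := by
  subst hD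
  set s := sortEig hH ⟨p - 1, by omega⟩
  set S : Matrix (Fin n) (Fin n) ℝ := diagonal fun i => √((∑ j, A i j) + -s)
  have hshift_pos : ∀ i, 0 < (∑ j, A i j) + -s := fun i => by
    have : 0 ≤ ∑ j, A i j :=
      Finset.sum_nonneg fun j _ => by rcases hA01 i j with h | h <;> simp [h]
    linarith
  have hS : IsUnit S := isUnit_diagonal.2 <| Pi.isUnit_iff.2 fun i =>
    (Real.sqrt_pos.2 (hshift_pos i)).ne'.isUnit
  have hSS : diagonal (fun i => ∑ j, A i j) - r • A - s • 1 = S * S - r • A := by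
    rw [sub_right_comm, ← diagonal_one, ← diagonal_smul, diagonal_sub, diagonal_mul_diagonal]
    simp only [Pi.smul_apply, smul_eq_mul, mul_one, Real.mul_self_sqrt (hshift_pos _).le, sub_eq_add_neg]
  have hrev : (⟨n - p, by omega⟩ : Fin n) = Fin.rev ⟨p - 1, by omega⟩ := by
    ext; simp only [Fin.val_rev]; omega
  rw [hrev]
  refine hH.sortEig_rev_eq_one_div_of_transpose_mul_mul_eq hLs (isUnit_nonsing_inv_iff.2 hS)
    (by linarith) _ ?_
  rw [hSS, transpose_inv_mul_mul_self_sub_smul_mul_inv (diagonal_transpose _) hS]
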